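/- With the greedy algorithm on the partition matroid M_{m,M} with M ≥ m², the intersection-competitive ratio satisfies |OPT| / E[|ALG ∩ OPT|] = (m + M)/(m + M/m) ≥ m/2. -/

import Mathlib

open Finset

/-- The part of element `i`: `m` singleton parts followed by `M` blocks of size `m`. -/
def part (m : ℕ) {n : ℕ} (i : Fin n) : ℕ :=
  if (i : ℕ) < m then (i : ℕ) else m + ((i : ℕ) - m) / m

/-- Independence in the partition matroid: at most one element per part. -/
def pIndep (m : ℕ) {n : ℕ} (S : Finset (Fin n)) : Prop :=
  ∀ i ∈ S, ∀ j ∈ S, part m i = part m j → i = j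

instance (m n : ℕ) (S : Finset (Fin n)) : Decidable (pIndep m S) :=
  inferInstanceAs (Decidable (∀ i ∈ S, ∀ j ∈ S, part m i = part m j → i = j))

/-- The greedy online algorithm on arrival order `σ`. -/
def greedyALG (m : ℕ) {n : ℕ} (σ : Equiv.Perm (Fin n)) : Finset (Fin n) :=
  (List.ofFn fun t => σ t).foldl
    (fun S r => if pIndep m (insert r S) then insert r S else S) ∅

/-!
On any arrival order, greedy keeps exactly the element of each part that arrives first. A
transposition inside a part moves "being first" from one element to another, so every element of a
part with `s` elements is first in a `1/s` fraction of the orders. As `OPT` is itself greedy's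
output on one order, it meets every part once, so `E[|ALG ∩ OPT|] = Σ_parts 1/|part| = m + M/m`.
-/

open Equiv

section FirstInFiber

variable {α β : Type*} [LinearOrder α]

/-- `σ t` is the element arriving at time `t`, so `σ.symm x` is the arrival time of `x`. -/
def IsFirstInFiber (f : α → β) (σ : Perm α) (x : α) : Prop :=
  ∀ y, f y = f x → σ.symm x ≤ σ.symm y

variable {f : α → β} {σ : Perm α}

theorem IsFirstInFiber.eq {x y : α} (hx : IsFirstInFiber f σ x) (hy : IsFirstInFiber f σ y)
    (h : f x = f y) : x = y :=
  σ.symm.injective ((hx y h.symm).antisymm (hy x h))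

theorem IsFirstInFiber.swap_mul {x y : α} (h : f y = f x) (hx : IsFirstInFiber f σ x) :
    IsFirstInFiber f (swap x y * σ) y := by
  intro z hz
  have hsymm (w : α) : (swap x y * σ).symm w = σ.symm (swap x y w) := by
    simp [Perm.mul_def]
  rw [hsymm, hsymm, swap_apply_right]
  refine hx _ ?_
  rcases eq_or_ne z x with rfl | hzx
  · rwa [swap_apply_left]
  rcases eq_or_ne z y with rfl | hzy
  · rw [swap_apply_right]
  · rw [swap_apply_of_ne_of_ne hzx hzy]
    exact hz.trans h

variable [Fintype α] [DecidableEq β]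

instance (f : α → β) (σ : Perm α) : DecidablePred (IsFirstInFiber f σ) :=
  fun _ => inferInstanceAs (Decidable (∀ _, _))

variable (f) in
def firstsInFibers (σ : Perm α) : Finset α := {x | IsFirstInFiber f σ x}

@[simp]
theorem mem_firstsInFibers {x : α} : x ∈ firstsInFibers f σ ↔ IsFirstInFiber f σ x := by
  simp [firstsInFibers]

theorem injOn_firstsInFibers : Set.InjOn f (firstsInFibers f σ) :=
  fun _ hx _ hy h => IsFirstInFiber.eq (mem_firstsInFibers.mp hx) (mem_firstsInFibers.mp hy) h

theorem exists_isFirstInFiber (σ : Perm α) (x : α) :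
    ∃ y, f y = f x ∧ IsFirstInFiber f σ y := by
  obtain ⟨y, hy, hmin⟩ := ({y | f y = f x} : Finset α).exists_min_image (σ.symm ·) ⟨x, by simp⟩
  simp only [mem_filter, mem_univ, true_and] at hy hmin
  exact ⟨y, hy, fun z hz => hmin z (hz.trans hy)⟩

theorem image_firstsInFibers (σ : Perm α) :
    (firstsInFibers f σ).image f = univ.image f := by
  refine (image_subset_image (subset_univ _)).antisymm fun b hb => ?_
  obtain ⟨x, -, rfl⟩ := mem_image.mp hb
  obtain ⟨y, hy, hfirst⟩ := exists_isFirstInFiber (f := f) σ x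
  exact mem_image.mpr ⟨y, by simpa using hfirst, hy⟩

theorem card_firstsInFibers (σ : Perm α) :
    #(firstsInFibers f σ) = #(univ.image f) := by
  rw [← image_firstsInFibers σ, card_image_of_injOn injOn_firstsInFibers]

theorem card_isFirstInFiber_eq {x y : α} (h : f y = f x) :
    #{σ : Perm α | IsFirstInFiber f σ x} = #{σ : Perm α | IsFirstInFiber f σ y} := by
  refine card_nbij' (swap x y * ·) (swap x y * ·) ?_ ?_ ?_ ?_
  · intro σ hσ
    simpa using IsFirstInFiber.swap_mul h (by simpa using hσ)
  · intro σ hσ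
    simpa [swap_comm] using IsFirstInFiber.swap_mul h.symm (by simpa using hσ)
  all_goals intro σ _; simp [← mul_assoc]

theorem card_isFirstInFiber_mul_card_fiber (x : α) :
    #{σ : Perm α | IsFirstInFiber f σ x} * #{y | f y = f x} = Fintype.card (Perm α) := by
  have hunique (σ : Perm α) : #(({y | f y = f x} : Finset α).filter (IsFirstInFiber f σ)) = 1 := by
    obtain ⟨y, hy, hfirst⟩ := exists_isFirstInFiber (f := f) σ x
    refine card_eq_one.mpr ⟨y, eq_singleton_iff_unique_mem.mpr ⟨by simp [hy, hfirst], ?_⟩⟩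
    simp only [mem_filter, mem_univ, true_and]
    exact fun z ⟨hz, hzfirst⟩ => hzfirst.eq hfirst (hz.trans hy.symm)
  calc #{σ : Perm α | IsFirstInFiber f σ x} * #{y | f y = f x}
      = ∑ y ∈ {y | f y = f x}, #{σ : Perm α | IsFirstInFiber f σ y} := by
        rw [sum_congr rfl fun y hy => (card_isFirstInFiber_eq (by simpa using hy)).symm,
          sum_const, smul_eq_mul, mul_comm]
    _ = ∑ σ : Perm α, #(({y | f y = f x} : Finset α).filter (IsFirstInFiber f σ)) :=
        (sum_card_bipartiteAbove_eq_sum_card_bipartiteBelow _).symm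
    _ = Fintype.card (Perm α) := by simp [hunique]

theorem sum_card_firstsInFibers_inter (τ : Perm α) :
    ∑ σ : Perm α, (#(firstsInFibers f σ ∩ firstsInFibers f τ) : ℝ) =
      ∑ b ∈ univ.image f, (Fintype.card (Perm α) : ℝ) / #{y | f y = b} := by
  have hinter (σ : Perm α) : firstsInFibers f σ ∩ firstsInFibers f τ
      = (firstsInFibers f τ).filter (IsFirstInFiber f σ) := by
    ext; simp [and_comm]
  have hcount (x : α) : (#{σ : Perm α | IsFirstInFiber f σ x} : ℝ) =
      Fintype.card (Perm α) / #{y | f y = f x} := by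
    rw [eq_div_iff (Nat.cast_ne_zero.mpr (card_ne_zero.mpr ⟨x, by simp⟩)), ← Nat.cast_mul,
      card_isFirstInFiber_mul_card_fiber]
  have hdouble : ∑ σ : Perm α, #((firstsInFibers f τ).filter (IsFirstInFiber f σ)) =
      ∑ x ∈ firstsInFibers f τ, #{σ : Perm α | IsFirstInFiber f σ x} :=
    sum_card_bipartiteAbove_eq_sum_card_bipartiteBelow _
  simp_rw [hinter]
  rw [← Nat.cast_sum, hdouble, Nat.cast_sum,
    ← image_firstsInFibers τ, sum_image injOn_firstsInFibers]
  exact sum_congr rfl fun x _ => hcount x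

end FirstInFiber

section Greedy

variable {β : Type*} [DecidableEq β] {n : ℕ} {f : Fin n → β} {σ : Perm (Fin n)}

variable (f) in
/-- The elements kept by greedy after the first `k` arrivals. -/
def firstsBefore (σ : Perm (Fin n)) (k : ℕ) : Finset (Fin n) :=
  (firstsInFibers f σ).filter fun x => (σ.symm x : ℕ) < k

theorem injOn_insert_firstsBefore_iff {k : ℕ} (hk : k < n) :
    Set.InjOn f (insert (σ ⟨k, hk⟩) (firstsBefore f σ k)) ↔ IsFirstInFiber f σ (σ ⟨k, hk⟩) := by
  set a := σ ⟨k, hk⟩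
  have ha : (σ.symm a : ℕ) = k := by simp [a]
  have hinj : Set.InjOn f (firstsBefore f σ k) :=
    injOn_firstsInFibers.mono (coe_subset.mpr (filter_subset _ _))
  rw [Set.injOn_insert (by simp [firstsBefore, ha]), and_iff_right hinj]
  constructor
  · intro hnot y hy
    by_contra! hlt
    obtain ⟨z, hz, hzfirst⟩ := exists_isFirstInFiber (f := f) σ y
    have hzy : σ.symm z ≤ σ.symm y := hzfirst y hz.symm
    have hzk : (σ.symm z : ℕ) < k := by omega
    exact hnot ⟨z, by simp [firstsBefore, hzfirst, hzk], hz.trans hy⟩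
  · rintro hfirst ⟨y, hy, hya⟩
    simp only [firstsBefore, coe_filter, mem_firstsInFibers, Set.mem_ofPred_eq] at hy
    have := hfirst y hya
    omega

theorem firstsBefore_succ {k : ℕ} (hk : k < n) :
    firstsBefore f σ (k + 1) = if IsFirstInFiber f σ (σ ⟨k, hk⟩)
      then insert (σ ⟨k, hk⟩) (firstsBefore f σ k) else firstsBefore f σ k := by
  have hlt (x : Fin n) : (σ.symm x : ℕ) < k + 1 ↔ (σ.symm x : ℕ) < k ∨ x = σ ⟨k, hk⟩ := by
    rw [Nat.lt_succ_iff_lt_or_eq, ← σ.symm_apply_eq, Fin.ext_iff]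
  split_ifs with hfirst <;> ext x <;> by_cases hx : x = σ ⟨k, hk⟩ <;>
    simp_all [firstsBefore]

theorem firstsBefore_eq_firstsInFibers : firstsBefore f σ n = firstsInFibers f σ :=
  filter_true_of_mem fun x _ => (σ.symm x).isLt

theorem pIndep_iff_injOn {m : ℕ} (S : Finset (Fin n)) :
    pIndep m S ↔ Set.InjOn (part m) (S : Set (Fin n)) :=
  Iff.rfl

theorem foldl_take_greedy_eq_firstsBefore (m : ℕ) (σ : Perm (Fin n)) {k : ℕ} (hk : k ≤ n) :
    ((List.ofFn fun t => σ t).take k).foldl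
      (fun S r => if pIndep m (insert r S) then insert r S else S) ∅ =
        firstsBefore (part m) σ k := by
  induction k with
  | zero => simp [firstsBefore]
  | succ k ih =>
    have hk' : k < n := hk
    have hget : (List.ofFn fun t => σ t)[k]? = some (σ ⟨k, hk'⟩) := by simp [hk']
    rw [List.take_add_one, hget, List.foldl_append, ih hk'.le, Option.toList_some, List.foldl_cons,
      List.foldl_nil, firstsBefore_succ hk']
    simp only [pIndep_iff_injOn, coe_insert, injOn_insert_firstsBefore_iff hk']

theorem greedyALG_eq_firstsInFibers (m : ℕ) (σ : Perm (Fin n)) :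
    greedyALG m σ = firstsInFibers (part m) σ := by
  rw [greedyALG, ← List.take_of_length_le (l := List.ofFn _) (List.length_ofFn).le,
    foldl_take_greedy_eq_firstsBefore m σ le_rfl, firstsBefore_eq_firstsInFibers]

end Greedy

section PartitionMatroid

variable {m M n : ℕ}

theorem part_eq_iff_of_lt {p : ℕ} (hp : p < m) (i : Fin n) : part m i = p ↔ (i : ℕ) = p := by
  unfold part
  split_ifs
  · rfl
  · generalize ((i : ℕ) - m) / m = q
    omega

theorem part_eq_add_iff (hm : 0 < m) (k : ℕ) (i : Fin n) :
    part m i = m + k ↔ (i : ℕ) ∈ Ico (m + k * m) (m + k * m + m) := by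
  unfold part
  split_ifs with hi
  · simp only [mem_Ico]
    omega
  · rw [Nat.add_right_inj, Nat.div_eq_iff hm, mem_Ico]
    omega

theorem card_filter_val_mem {s : Finset ℕ} (hs : ∀ j ∈ s, j < n) :
    #{i : Fin n | (i : ℕ) ∈ s} = #s :=
  card_bij (fun i _ => (i : ℕ)) (fun i hi => by simpa using hi) (fun _ _ _ _ => Fin.ext)
    fun j hj => ⟨⟨j, hs j hj⟩, by simpa using hj, rfl⟩

theorem card_fiber_part_of_lt {p : ℕ} (hp : p < m) (hpn : p < n) :
    #{i : Fin n | part m i = p} = 1 := by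
  simp_rw [part_eq_iff_of_lt hp, ← mem_singleton (a := p)]
  rw [card_filter_val_mem (by simpa), card_singleton]

theorem card_fiber_part_add (hm : 0 < m) (hn : n = (M + 1) * m) {k : ℕ} (hk : k < M) :
    #{i : Fin n | part m i = m + k} = m := by
  have hkn : m + k * m + m ≤ n := by
    have := Nat.mul_le_mul_right m (show k + 1 ≤ M from hk)
    rw [hn]
    linarith
  simp_rw [part_eq_add_iff hm]
  rw [card_filter_val_mem fun j hj => by simp only [mem_Ico] at hj; omega, Nat.card_Ico]
  omega

theorem part_lt (hn : n = (M + 1) * m) (i : Fin n) : part m i < m + M := by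
  have hi : (i : ℕ) < m + M * m := by
    have := add_one_mul M m
    omega
  unfold part
  split_ifs with h
  · omega
  · have := Nat.div_lt_of_lt_mul (show (i : ℕ) - m < m * M by rw [mul_comm]; omega)
    omega

theorem image_part_univ (hm : 0 < m) (hn : n = (M + 1) * m) :
    univ.image (part m : Fin n → ℕ) = range (m + M) := by
  refine (image_subset_iff.mpr fun i _ => mem_range.mpr (part_lt hn i)).antisymm fun p hp => ?_
  obtain ⟨i, hi⟩ : ({i : Fin n | part m i = p} : Finset (Fin n)).Nonempty := by
    rw [← card_pos]
    rcases lt_or_ge p m with hpm | hpm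
    · have hmn : m ≤ n := hn ▸ Nat.le_mul_of_pos_left m M.succ_pos
      rw [card_fiber_part_of_lt hpm (by omega)]
      exact one_pos
    · obtain ⟨k, rfl⟩ := Nat.exists_eq_add_of_le hpm
      rw [card_fiber_part_add hm hn (by simpa using hp)]
      exact hm
  exact mem_image.mpr ⟨i, mem_univ _, by simpa using hi⟩

theorem sum_range_div_card_fiber_part (hm : 0 < m) (hn : n = (M + 1) * m) (K : ℝ) :
    ∑ p ∈ range (m + M), K / #{i : Fin n | part m i = p} = K * (m + M / m) := by
  have hmn : m ≤ n := hn ▸ Nat.le_mul_of_pos_left m M.succ_pos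
  have hsingletons : ∑ p ∈ range m, K / #{i : Fin n | part m i = p} = m * K := by
    rw [sum_congr rfl fun p hp => by
      rw [card_fiber_part_of_lt (mem_range.mp hp) ((mem_range.mp hp).trans_le hmn)]]
    simp
  have hblocks : ∑ k ∈ range M, K / #{i : Fin n | part m i = m + k} = M * (K / m) := by
    rw [sum_congr rfl fun k hk => by rw [card_fiber_part_add hm hn (mem_range.mp hk)]]
    simp
  rw [sum_range_add, hsingletons, hblocks]
  ring

end PartitionMatroid

theorem half_le_add_div_add_div {m M : ℝ} (hm : 0 < m) (hM : m ^ 2 ≤ M) :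
    m / 2 ≤ (m + M) / (m + M / m) := by
  have hM0 : 0 ≤ M := (sq_nonneg m).trans hM
  rw [div_le_div_iff₀ two_pos (by positivity)]
  have : m * (m + M / m) = m ^ 2 + M := by field_simp
  nlinarith

/-- Greedy on the partition matroid `M_{m,M}` with `M ≥ m²`: the optimum has `m + M`
elements, `E[|ALG ∩ OPT|] = m + M/m`, and the intersection-competitive ratio
`|OPT| / E[|ALG ∩ OPT|] = (m+M)/(m+M/m) ≥ m/2`. Here `OPT` is greedy's output on the
identity (decreasing-value) order. -/
theorem greedy_partition_matroid_intersection (m M n : ℕ) (hm : 1 ≤ m)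
    (hM : m ^ 2 ≤ M) (hn : n = (M + 1) * m) :
    (((greedyALG m (1 : Equiv.Perm (Fin n))).card : ℝ) = m + M) ∧
    (∑ σ : Equiv.Perm (Fin n),
        ((greedyALG m σ ∩ greedyALG m (1 : Equiv.Perm (Fin n))).card : ℝ) =
      (Fintype.card (Equiv.Perm (Fin n)) : ℝ) * ((m : ℝ) + (M : ℝ) / m)) ∧
    ((m : ℝ) / 2 ≤ ((m : ℝ) + M) / ((m : ℝ) + (M : ℝ) / m)) := by
  simp_rw [greedyALG_eq_firstsInFibers]
  refine ⟨?_, ?_, half_le_add_div_add_div (by exact_mod_cast hm) (by exact_mod_cast hM)⟩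
  · rw [card_firstsInFibers, image_part_univ hm hn, card_range, Nat.cast_add]
  · rw [sum_card_firstsInFibers_inter, image_part_univ hm hn, sum_range_div_card_fiber_part hm hn]
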